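/- arXiv:2605.25779 — 2 statements merged into one kernel-verified Lean document; each statement's English description precedes it below -/
import Mathlib

section
/- Fix θ ∈ ℝ and let H_θ = {z ∈ ℂ : Re(e^{−iθ} z) < 1} be the open half-plane bounded by the line tangent to the unit circle at e^{iθ}. Then for all z₁, z₂ ∈ H_θ one has inf_{w ∈ ∂H_θ} (|z₁ − w| + |w − z₂|) = |2 e^{iθ} − z₁ − e^{2iθ} conj(z₂)| = |2 − e^{−iθ} z₁ − e^{iθ} conj(z₂)|; consequently s_{H_θ}(z₁, z₂) = |z₁ − z₂| / |2 − e^{−iθ} z₁ − e^{iθ} conj(z₂)| for z₁ ≠ z₂. -/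
open Complex

/-- The triangular ratio metric of a proper nonempty subset `D ⊆ ℂ`:
`s_D(u, v) = |u - v| / inf_{w ∈ ∂D} (|u - w| + |w - v|)`
(for `u = v` the numerator vanishes, so the value is `0`). -/
noncomputable def sD (D : Set ℂ) (u v : ℂ) : ℝ :=
  Norm.norm (u - v) /
    sInf ((fun w => Norm.norm (u - w) + Norm.norm (w - v)) '' frontier D)

open ComplexConjugate

/-!
Write `u = e^{iθ}`, so that `H_θ = {z | Re(ū z) < 1}` and `σ z = 2u - u² z̄` is the reflection
across the boundary line `∂H_θ`. For `w` on that line `|w - z₂| = |w - σ z₂|`, so the triangle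
inequality gives `|z₁ - w| + |w - z₂| ≥ |z₁ - σ z₂|`. Since `z₁` and `σ z₂` lie on opposite sides of
the line, the segment `[z₁, σ z₂]` meets it, and there the bound is attained.
-/

theorem frontier_setOf_re_mul_lt {c : ℂ} (hc : c ≠ 0) (r : ℝ) :
    frontier {z : ℂ | (c * z).re < r} = {z : ℂ | (c * z).re = r} := by
  change frontier ((Homeomorph.mulLeft₀ c hc) ⁻¹' {z : ℂ | z.re < r}) = _
  rw [← Homeomorph.preimage_frontier, frontier_setOfPred_re_lt]
  rfl

theorem exists_mem_segment_eq_of_le {E : Type*} [AddCommGroup E] [Module ℝ E]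
    [TopologicalSpace E] [IsTopologicalAddGroup E] [ContinuousSMul ℝ E]
    {f : E → ℝ} (hf : Continuous f) {x y : E} {r : ℝ} (hx : f x ≤ r) (hy : r ≤ f y) :
    ∃ w ∈ segment ℝ x y, f w = r :=
  (convex_segment x y).isPreconnected.intermediate_value (left_mem_segment ℝ x y)
    (right_mem_segment ℝ x y) hf.continuousOn ⟨hx, hy⟩

theorem sInf_image_dist_add_dist_eq {α : Type*} [PseudoMetricSpace α] {S : Set α}
    {x y y' w₀ : α} (hS : ∀ w ∈ S, dist w y = dist w y') (hw₀ : w₀ ∈ S)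
    (hbtw : dist x w₀ + dist w₀ y' = dist x y') :
    sInf ((fun w => dist x w + dist w y) '' S) = dist x y' := by
  refine IsLeast.csInf_eq ⟨⟨w₀, hw₀, show dist x w₀ + dist w₀ y = _ by rw [hS w₀ hw₀, hbtw]⟩, ?_⟩
  rintro _ ⟨w, hw, rfl⟩
  change _ ≤ dist x w + dist w y
  rw [hS w hw]
  exact dist_triangle x w y'

/-- The reflection across the line `{z | Re (conj u * z) = 1}`, which for `‖u‖ = 1` is the
tangent to the unit circle at `u`. -/
def tangentReflection (u z : ℂ) : ℂ :=
  2 * u - u ^ 2 * conj z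

section TangentReflection

variable {u : ℂ}

theorem conj_mul_self_of_norm_eq_one (hu : ‖u‖ = 1) : conj u * u = 1 := by
  rw [conj_mul', hu]
  norm_num

theorem re_conj_mul_tangentReflection (hu : ‖u‖ = 1) (z : ℂ) :
    (conj u * tangentReflection u z).re = 2 - (conj u * z).re := by
  have h : conj u * tangentReflection u z = 2 - conj (conj u * z) := by
    rw [tangentReflection, map_mul, conj_conj]
    linear_combination (2 - u * conj z) * conj_mul_self_of_norm_eq_one hu
  rw [h, sub_re, conj_re]
  norm_num

theorem dist_tangentReflection_of_re_eq_one (hu : ‖u‖ = 1) {w : ℂ} (hw : (conj u * w).re = 1) (z : ℂ) :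
    dist w (tangentReflection u z) = dist w z := by
  have hline : conj u * w + u * conj w = 2 := by
    have h := add_conj (conj u * w)
    rw [hw, map_mul, conj_conj] at h
    exact_mod_cast h
  have h : conj u * (w - tangentReflection u z) = -(u * conj (w - z)) := by
    rw [tangentReflection, map_sub]
    linear_combination hline + (u * conj z - 2) * conj_mul_self_of_norm_eq_one hu
  calc dist w (tangentReflection u z) = ‖conj u * (w - tangentReflection u z)‖ := by
        rw [dist_eq_norm, norm_mul, norm_conj, hu, one_mul]
    _ = ‖u * conj (w - z)‖ := by rw [h, norm_neg]
    _ = dist w z := by rw [norm_mul, hu, one_mul, norm_conj, dist_eq_norm]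

theorem norm_sub_tangentReflection (hu : ‖u‖ = 1) (z₁ z₂ : ℂ) :
    ‖z₁ - tangentReflection u z₂‖ = ‖2 - conj u * z₁ - u * conj z₂‖ := by
  have h : conj u * (tangentReflection u z₂ - z₁) = 2 - conj u * z₁ - u * conj z₂ := by
    rw [tangentReflection]
    linear_combination (2 - u * conj z₂) * conj_mul_self_of_norm_eq_one hu
  rw [norm_sub_rev, ← h, norm_mul, norm_conj, hu, one_mul]

theorem sInf_dist_add_dist_frontier_halfplane (hu : ‖u‖ = 1) {z₁ z₂ : ℂ}
    (hz₁ : (conj u * z₁).re < 1) (hz₂ : (conj u * z₂).re < 1) :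
    sInf ((fun w => dist z₁ w + dist w z₂) '' frontier {z : ℂ | (conj u * z).re < 1}) =
      dist z₁ (tangentReflection u z₂) := by
  have hu₀ : conj u ≠ 0 := by
    rw [map_ne_zero]
    exact norm_ne_zero_iff.mp (hu ▸ one_ne_zero)
  rw [frontier_setOf_re_mul_lt hu₀]
  obtain ⟨w₀, hw₀seg, hw₀⟩ := exists_mem_segment_eq_of_le
    (f := fun w => (conj u * w).re) (by fun_prop) hz₁.le
    (by rw [re_conj_mul_tangentReflection hu]; linarith)
  exact sInf_image_dist_add_dist_eq
    (fun w hw => (dist_tangentReflection_of_re_eq_one hu hw z₂).symm) hw₀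
    (dist_add_dist_of_mem_segment hw₀seg)

end TangentReflection

theorem triangular_ratio_halfplane (θ : ℝ) (z₁ z₂ : ℂ)
    (hz₁ : z₁ ∈ {z : ℂ | (Complex.exp (-(θ : ℂ) * Complex.I) * z).re < 1})
    (hz₂ : z₂ ∈ {z : ℂ | (Complex.exp (-(θ : ℂ) * Complex.I) * z).re < 1}) :
    sInf ((fun w => Norm.norm (z₁ - w) + Norm.norm (w - z₂)) ''
        frontier {z : ℂ | (Complex.exp (-(θ : ℂ) * Complex.I) * z).re < 1}) =
      Norm.norm (2 * Complex.exp ((θ : ℂ) * Complex.I) - z₁ -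
        Complex.exp (2 * (θ : ℂ) * Complex.I) * (starRingEnd ℂ) z₂) ∧
    Norm.norm (2 * Complex.exp ((θ : ℂ) * Complex.I) - z₁ -
        Complex.exp (2 * (θ : ℂ) * Complex.I) * (starRingEnd ℂ) z₂) =
      Norm.norm (2 - Complex.exp (-(θ : ℂ) * Complex.I) * z₁ -
        Complex.exp ((θ : ℂ) * Complex.I) * (starRingEnd ℂ) z₂) ∧
    (z₁ ≠ z₂ →
      sD {z : ℂ | (Complex.exp (-(θ : ℂ) * Complex.I) * z).re < 1} z₁ z₂ =
        Norm.norm (z₁ - z₂) /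
          Norm.norm (2 - Complex.exp (-(θ : ℂ) * Complex.I) * z₁ -
            Complex.exp ((θ : ℂ) * Complex.I) * (starRingEnd ℂ) z₂)) := by
  set u := Complex.exp ((θ : ℂ) * Complex.I)
  have hu : ‖u‖ = 1 := norm_exp_ofReal_mul_I θ
  have hconj : Complex.exp (-(θ : ℂ) * Complex.I) = conj u := by
    rw [← exp_conj, map_mul, conj_ofReal, conj_I, mul_neg, neg_mul]
  have hsq : Complex.exp (2 * (θ : ℂ) * Complex.I) = u ^ 2 := by
    rw [← exp_nat_mul]
    ring_nf
  have hσ : 2 * u - z₁ - u ^ 2 * conj z₂ = -(z₁ - tangentReflection u z₂) := by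
    rw [tangentReflection]
    ring
  have hinf : sInf ((fun w => ‖z₁ - w‖ + ‖w - z₂‖) '' frontier {z : ℂ | (conj u * z).re < 1}) =
      ‖2 - conj u * z₁ - u * conj z₂‖ := by
    simpa only [dist_eq_norm, norm_sub_tangentReflection hu] using
      sInf_dist_add_dist_frontier_halfplane hu (hconj ▸ hz₁) (hconj ▸ hz₂)
  rw [hconj, hsq, hσ, norm_neg, norm_sub_tangentReflection hu]
  exact ⟨hinf, rfl, fun _ => by rw [sD, hinf]⟩
end

section
/- Let z₁, z₂ ∈ 𝕌 and suppose ψ ∈ ℝ is such that e^{iψ} minimizes the function w ↦ |z₁ − w| + |w − z₂| over the unit circle {|w| = 1}. Then |(1 − e^{−iψ} z₁)(1 − e^{iψ} conj(z₂))| ≤ (1/2) · |2 − e^{−iψ} z₁ − e^{iψ} conj(z₂)|. -/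
/-!
Put `α = 1 - e^{-iψ} z₁` and `β = 1 - e^{-iψ} z₂`, so that `|α| = |z₁ - e^{iψ}|` and
`|β| = |e^{iψ} - z₂|`. Both have positive real part, and the vanishing at `ψ` of the derivative of
`θ ↦ |z₁ - e^{iθ}| + |e^{iθ} - z₂|` says `Im α / |α| = Im β̄ / |β̄|`; hence `α` and `β̄` have the
same argument and `|α + β̄| = |α| + |β|`. The minimal focal sum is at most `2`: at the two points
where the line through `z₁, z₂` meets the circle, the focal sums add up to twice the chord. Therefore
`|α β̄| ≤ (|α| + |β|)² / 4 ≤ (|α| + |β|) / 2 = |α + β̄| / 2`.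
-/

open Complex ComplexConjugate

theorem exists_nonneg_norm_add_smul_eq {E : Type*} [NormedAddCommGroup E] [NormedSpace ℝ E]
    {x d : E} {r : ℝ} (hx : ‖x‖ ≤ r) (hd : ‖d‖ = 1) : ∃ t : ℝ, 0 ≤ t ∧ ‖x + t • d‖ = r := by
  have hr : 0 ≤ r := (norm_nonneg x).trans hx
  have hcont : ContinuousOn (fun t : ℝ => ‖x + t • d‖) (Set.Icc 0 (2 * r)) := by fun_prop
  have hfar : r ≤ ‖x + (2 * r) • d‖ := by
    have := norm_sub_norm_le ((2 * r) • d) (-x)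
    rw [norm_smul, hd, Real.norm_of_nonneg (by positivity), norm_neg, sub_neg_eq_add,
      add_comm] at this
    linarith
  obtain ⟨t, ht, hteq⟩ := intermediate_value_Icc (by positivity) hcont
    ⟨by simpa using hx, hfar⟩
  exact ⟨t, ht.1, hteq⟩

theorem exists_norm_eq_norm_sub_add_norm_sub_le {E : Type*} [NormedAddCommGroup E]
    [NormedSpace ℝ E] [Nontrivial E] {x y : E} {r : ℝ} (hx : ‖x‖ ≤ r) (hy : ‖y‖ ≤ r) :
    ∃ w, ‖w‖ = r ∧ ‖x - w‖ + ‖w - y‖ ≤ 2 * r := by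
  obtain ⟨d, hd, hyx⟩ : ∃ d : E, ‖d‖ = 1 ∧ y = x + ‖y - x‖ • d := by
    rcases eq_or_ne y x with rfl | hne
    · obtain ⟨d, hd⟩ := exists_norm_eq E zero_le_one
      exact ⟨d, hd, by simp⟩
    · have hm : ‖y - x‖ ≠ 0 := norm_ne_zero_iff.mpr (sub_ne_zero.mpr hne)
      refine ⟨‖y - x‖⁻¹ • (y - x), ?_, ?_⟩
      · rw [norm_smul, norm_inv, norm_norm, inv_mul_cancel₀ hm]
      · rw [smul_smul, mul_inv_cancel₀ hm, one_smul]
        abel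
  set m := ‖y - x‖
  have hnorm : ∀ s : ℝ, ‖s • d‖ = |s| := fun s => by rw [norm_smul, hd, mul_one, Real.norm_eq_abs]
  obtain ⟨t₁, ht₁, hw₁⟩ := exists_nonneg_norm_add_smul_eq hy hd
  obtain ⟨t₂, ht₂, hw₂⟩ := exists_nonneg_norm_add_smul_eq hx (norm_neg d ▸ hd)
  have hsum₁ : ‖x - (y + t₁ • d)‖ + ‖y + t₁ • d - y‖ = m + 2 * t₁ := by
    rw [hyx, show x - (x + m • d + t₁ • d) = (-(m + t₁)) • d by module,
      show x + m • d + t₁ • d - (x + m • d) = t₁ • d by module, hnorm, hnorm, abs_neg,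
      abs_of_nonneg (by positivity), abs_of_nonneg ht₁]
    ring
  have hsum₂ : ‖x - (x + t₂ • -d)‖ + ‖x + t₂ • -d - y‖ = m + 2 * t₂ := by
    rw [hyx, show x - (x + t₂ • -d) = t₂ • d by module,
      show x + t₂ • -d - (x + m • d) = (-(t₂ + m)) • d by module, hnorm, hnorm, abs_neg,
      abs_of_nonneg ht₂, abs_of_nonneg (by positivity)]
    ring
  have hchord : m + t₁ + t₂ ≤ 2 * r := by
    have h := norm_sub_le (y + t₁ • d) (x + t₂ • -d)
    rw [hw₁, hw₂, hyx, show x + m • d + t₁ • d - (x + t₂ • -d) = (m + t₁ + t₂) • d by module,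
      hnorm, abs_of_nonneg (by positivity)] at h
    linarith
  by_cases h : m + 2 * t₁ ≤ 2 * r
  · exact ⟨_, hw₁, hsum₁.trans_le h⟩
  · exact ⟨_, hw₂, by linarith⟩

theorem HasDerivAt.norm {F : Type*} [NormedAddCommGroup F] [InnerProductSpace ℝ F]
    {f : ℝ → F} {f' : F} {x : ℝ} (hf : HasDerivAt f f' x) (h0 : f x ≠ 0) :
    HasDerivAt (fun t => ‖f t‖) (Inner.inner ℝ (f x) f' / ‖f x‖) x := by
  have hsq : (fun t => ‖f t‖) = fun t => Real.sqrt (‖f t‖ ^ 2) := by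
    funext t; rw [Real.sqrt_sq (norm_nonneg _)]
  rw [hsq]
  convert hf.norm_sq.sqrt (by positivity) using 1
  rw [Real.sqrt_sq (norm_nonneg _)]
  field_simp

theorem norm_sub_exp_mul_I (z : ℂ) (θ : ℝ) : ‖z - exp (θ * I)‖ = ‖1 - exp (-θ * I) * z‖ := by
  rw [← one_mul ‖1 - _‖, ← norm_exp_ofReal_mul_I θ, ← norm_mul, ← norm_neg]
  congr 1
  have h : exp (-θ * I) * exp (θ * I) = 1 := by
    rw [neg_mul, exp_neg, inv_mul_cancel₀ (exp_ne_zero _)]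
  linear_combination z * h

theorem hasDerivAt_norm_sub_exp_mul_I {z : ℂ} {θ : ℝ} (h : z ≠ exp (θ * I)) :
    HasDerivAt (fun t : ℝ => ‖z - exp (t * I)‖)
      ((1 - exp (-θ * I) * z).im / ‖1 - exp (-θ * I) * z‖) θ := by
  have hexp : HasDerivAt (fun t : ℝ => exp (t * I)) (exp (θ * I) * I) θ :=
    ((hasDerivAt_id θ).ofReal_comp.mul_const I).cexp.congr_deriv (by simp)
  convert (hexp.const_sub z).norm (sub_ne_zero.mpr h) using 1
  rw [norm_sub_exp_mul_I, Complex.inner]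
  congr 1
  have hneg : exp (-θ * I) = exp ((-θ : ℝ) * I) := by push_cast; rfl
  rw [hneg]
  simp only [sub_im, one_im, mul_im, mul_re, neg_re, neg_im, sub_re, conj_re, conj_im, I_re, I_im,
    exp_ofReal_mul_I_re, exp_ofReal_mul_I_im, Real.cos_neg, Real.sin_neg]
  ring

theorem im_div_norm_add_im_div_norm_eq_zero_of_isLocalMin {z₁ z₂ : ℂ} {ψ : ℝ}
    (h₁ : z₁ ≠ exp (ψ * I)) (h₂ : z₂ ≠ exp (ψ * I))
    (hmin : IsLocalMin (fun θ : ℝ => ‖z₁ - exp (θ * I)‖ + ‖exp (θ * I) - z₂‖) ψ) :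
    (1 - exp (-ψ * I) * z₁).im / ‖1 - exp (-ψ * I) * z₁‖ +
      (1 - exp (-ψ * I) * z₂).im / ‖1 - exp (-ψ * I) * z₂‖ = 0 := by
  simp only [norm_sub_rev (exp _) z₂] at hmin
  exact hmin.hasDerivAt_eq_zero
    ((hasDerivAt_norm_sub_exp_mul_I h₁).add (hasDerivAt_norm_sub_exp_mul_I h₂))

theorem Complex.sameRay_of_im_div_norm_eq {a b : ℂ} (ha : 0 ≤ a.re) (hb : 0 ≤ b.re)
    (h : a.im / ‖a‖ = b.im / ‖b‖) : SameRay ℝ a b :=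
  Complex.sameRay_iff.mpr <| Or.inr <| Or.inr <| by
    rw [arg_of_re_nonneg ha, arg_of_re_nonneg hb, h]

theorem norm_mul_le_half_norm_add_of_sameRay {R : Type*} [NormedRing R] [NormedSpace ℝ R]
    {a b : R} (hab : SameRay ℝ a b) (h : ‖a‖ + ‖b‖ ≤ 2) : ‖a * b‖ ≤ 1 / 2 * ‖a + b‖ := by
  rw [hab.norm_add]
  nlinarith [norm_mul_le a b, sq_nonneg (‖a‖ - ‖b‖), norm_nonneg a, norm_nonneg b]

theorem re_one_sub_pos {w : ℂ} (hw : ‖w‖ < 1) : 0 < (1 - w).re := by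
  rw [sub_re, one_re, sub_pos]
  exact (re_le_norm w).trans_lt hw

theorem contact_point_product_bound (z₁ z₂ : ℂ)
    (hz₁ : ‖z₁‖ < 1) (hz₂ : ‖z₂‖ < 1) (ψ : ℝ)
    (hψ : ∀ w : ℂ, ‖w‖ = 1 →
      ‖z₁ - Complex.exp ((ψ : ℂ) * Complex.I)‖ +
        ‖Complex.exp ((ψ : ℂ) * Complex.I) - z₂‖ ≤
      ‖z₁ - w‖ + ‖w - z₂‖) :
    ‖(1 - Complex.exp (-(ψ : ℂ) * Complex.I) * z₁) *
        (1 - Complex.exp ((ψ : ℂ) * Complex.I) * (starRingEnd ℂ) z₂)‖ ≤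
      (1 / 2) * ‖2 - Complex.exp (-(ψ : ℂ) * Complex.I) * z₁ -
        Complex.exp ((ψ : ℂ) * Complex.I) * (starRingEnd ℂ) z₂‖ := by
  set α := 1 - exp (-ψ * I) * z₁
  set β := 1 - exp (-ψ * I) * z₂
  have hconj : 1 - exp (ψ * I) * conj z₂ = conj β := by
    simp only [β, map_sub, map_one, map_mul, ← exp_conj, map_neg, conj_ofReal, conj_I,
      mul_neg, neg_neg, mul_comm]
  have hre : ∀ z : ℂ, ‖z‖ < 1 → 0 < (1 - exp (-ψ * I) * z).re := fun z hz =>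
    re_one_sub_pos <| by rwa [norm_mul, ← ofReal_neg, norm_exp_ofReal_mul_I, one_mul]
  have hne : ∀ z : ℂ, ‖z‖ < 1 → z ≠ exp (ψ * I) := fun z hz h =>
    (norm_exp_ofReal_mul_I ψ ▸ h ▸ hz).false
  have hcrit : α.im / ‖α‖ + β.im / ‖β‖ = 0 :=
    im_div_norm_add_im_div_norm_eq_zero_of_isLocalMin (hne z₁ hz₁) (hne z₂ hz₂)
      (Filter.Eventually.of_forall fun θ => hψ _ (norm_exp_ofReal_mul_I θ))
  have hray : SameRay ℝ α (conj β) := Complex.sameRay_of_im_div_norm_eq (hre z₁ hz₁).le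
    (by rw [conj_re]; exact (hre z₂ hz₂).le) (by rw [conj_im, norm_conj, neg_div]; linarith)
  have hsum : ‖α‖ + ‖conj β‖ ≤ 2 := by
    obtain ⟨w, hw, hw2⟩ := exists_norm_eq_norm_sub_add_norm_sub_le hz₁.le hz₂.le
    rw [norm_conj, ← norm_sub_exp_mul_I, ← norm_sub_exp_mul_I, norm_sub_rev z₂]
    linarith [hψ w hw]
  rw [hconj, show 2 - exp (-ψ * I) * z₁ - exp (ψ * I) * conj z₂ =
    α + (1 - exp (ψ * I) * conj z₂) by ring, hconj]
  exact norm_mul_le_half_norm_add_of_sameRay hray hsum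
end
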